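/- Let n ≥ 2 and let G ∈ 𝒢_{2n} satisfy F(G) = n−1. If G contains no independent set of size n, then G is a brick (i.e., G is 3-connected and bicritical), and in particular G is 1-extendable. -/

import Mathlib

open SimpleGraph

/-- `M` is a perfect matching of the simple graph `G`, viewed as a set of edges:
the edges of `M` are pairwise disjoint edges of `G` covering every vertex. -/
def IsPM {V : Type*} (G : SimpleGraph V) (M : Set (Sym2 V)) : Prop :=
  M ⊆ G.edgeSet ∧
  (∀ e ∈ M, ∀ f ∈ M, e ≠ f → ∀ v : V, v ∈ e → v ∉ f) ∧
  (∀ v : V, ∃ e ∈ M, v ∈ e)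

/-- `S` is a forcing set of the perfect matching `M` of `G`:
`S ⊆ M` and `M` is the unique perfect matching of `G` containing `S`. -/
def IsForcingSet {V : Type*} (G : SimpleGraph V) (M S : Set (Sym2 V)) : Prop :=
  S ⊆ M ∧ ∀ M', IsPM G M' → S ⊆ M' → M' = M

/-- The forcing number `f(G,M)`: smallest cardinality of a forcing set of `M`. -/
noncomputable def forcingNum {V : Type*} (G : SimpleGraph V) (M : Set (Sym2 V)) : ℕ :=
  sInf {k | ∃ S, IsForcingSet G M S ∧ S.ncard = k}

/-- The minimum forcing number `f(G)`. -/
noncomputable def minForcing {V : Type*} (G : SimpleGraph V) : ℕ :=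
  sInf {k | ∃ M, IsPM G M ∧ forcingNum G M = k}

/-- The maximum forcing number `F(G)`. -/
noncomputable def maxForcing {V : Type*} (G : SimpleGraph V) : ℕ :=
  sSup {k | ∃ M, IsPM G M ∧ forcingNum G M = k}

/-- Vertex connectivity `κ(G)`: least size of a set of vertices whose deletion
disconnects the graph or leaves at most one vertex. -/
noncomputable def vertexConn {V : Type*} (G : SimpleGraph V) : ℕ :=
  sInf {k | ∃ X : Set V, X.ncard = k ∧ (¬ (G.induce Xᶜ).Connected ∨ Xᶜ.ncard ≤ 1)}

/-- Edge connectivity `λ(G)`: least size of a set of edges whose deletion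
disconnects the graph. -/
noncomputable def edgeConn {V : Type*} (G : SimpleGraph V) : ℕ :=
  sInf {k | ∃ F : Set (Sym2 V), F ⊆ G.edgeSet ∧ F.ncard = k ∧ ¬ (G.deleteEdges F).Connected}

/-- `G` is `l`-extendable: `G` is connected, has at least `2l+2` vertices, has a
perfect matching, and every matching of size `l` extends to a perfect matching. -/
def IsExtendable {V : Type*} [Fintype V] (G : SimpleGraph V) (l : ℕ) : Prop :=
  G.Connected ∧ 2 * l + 2 ≤ Fintype.card V ∧ (∃ M, IsPM G M) ∧
    ∀ N : Set (Sym2 V), N ⊆ G.edgeSet →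
      (∀ e ∈ N, ∀ f ∈ N, e ≠ f → ∀ v : V, v ∈ e → v ∉ f) → N.ncard = l →
      ∃ M, IsPM G M ∧ N ⊆ M

/-- `G` is factor-critical: deleting any vertex leaves a graph with a perfect matching. -/
def IsFactorCritical {V : Type*} (G : SimpleGraph V) : Prop :=
  ∀ v : V, ∃ M, IsPM (G.induce {v}ᶜ) M

/-- `o(G)`: the number of connected components of odd order. -/
noncomputable def oddComponents {V : Type*} (G : SimpleGraph V) : ℕ :=
  {c : G.ConnectedComponent | Odd c.supp.ncard}.ncard

/-- `G` belongs to `𝒦_{n,n}⁺`: it is obtained from `K_{n,n}` by adding edges inside one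
partite set; equivalently there is an independent set `A` of size `n` all of whose
vertices are adjacent to all vertices outside `A`. -/
def InKnnPlus {V : Type*} (n : ℕ) (G : SimpleGraph V) : Prop :=
  ∃ A : Set V, A.ncard = n ∧ (∀ a ∈ A, ∀ b ∈ A, ¬ G.Adj a b) ∧
    ∀ a ∈ A, ∀ b ∉ A, G.Adj a b

/-- `M` is a perfect matching of the subgraph of `G` induced by the vertex set `T`. -/
def IsPMOn {V : Type*} (G : SimpleGraph V) (T : Set V) (M : Set (Sym2 V)) : Prop :=
  M ⊆ G.edgeSet ∧ (∀ e ∈ M, ∀ w : V, w ∈ e → w ∈ T) ∧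
  (∀ e ∈ M, ∀ f ∈ M, e ≠ f → ∀ v : V, v ∈ e → v ∉ f) ∧
  (∀ w ∈ T, ∃ e ∈ M, w ∈ e)

/-- The forcing number of the perfect matching `M` of the subgraph of `G`
induced by the vertex set `T`. -/
noncomputable def forcingNumOn {V : Type*} (G : SimpleGraph V) (T : Set V)
    (M : Set (Sym2 V)) : ℕ :=
  sInf {k | ∃ S, S ⊆ M ∧ (∀ M', IsPMOn G T M' → S ⊆ M' → M' = M) ∧ S.ncard = k}

/-- `{i,j}` is one of the `k` special pairs `{2t, 2t+1}` (0-indexed), `t < k`. -/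
def pairIdx (k : ℕ) {n : ℕ} (i j : Fin n) : Prop :=
  ∃ t, t < k ∧ ((i.val = 2 * t ∧ j.val = 2 * t + 1) ∨ (j.val = 2 * t ∧ i.val = 2 * t + 1))

/-- The graph `H_k` on vertices `u_0,…,u_{n-1}` (left copy) and `v_0,…,v_{n-1}`
(right copy): edges `u_i v_i` for all `i`; `u_{2t} u_{2t+1}` and `v_{2t} v_{2t+1}`
for `t < k`; and `u_i v_j`, `u_j v_i` for every pair `i ≠ j` that is not one of the
`k` special pairs. -/
def Hgraph (n k : ℕ) : SimpleGraph (Fin n ⊕ Fin n) :=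
  SimpleGraph.fromRel (fun x y =>
    match x, y with
    | Sum.inl i, Sum.inr j => i = j ∨ ¬ pairIdx k i j
    | Sum.inl i, Sum.inl j => pairIdx k i j
    | Sum.inr i, Sum.inr j => pairIdx k i j
    | Sum.inr _, Sum.inl _ => False)

/-- The perfect matching `M₀ = {u_i v_i : i}` of `H_k`. -/
def M0 (n : ℕ) : Set (Sym2 (Fin n ⊕ Fin n)) :=
  {e | ∃ i : Fin n, e = s(Sum.inl i, Sum.inr i)}

/-! Fix a perfect matching `M` with `f(G, M) = n - 1` and let `σ` be its partner map. Dropping two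
edges `a σa`, `x σx` from `M` leaves `n - 2` edges, too few to force `M`, so another perfect
matching pairs `a, σa, x, σx` among themselves differently; hence every vertex `a` is adjacent to
`x` or to `σ x`. So after deleting at most two vertices every remaining vertex is joined to a
surviving edge of `M`, and `G` stays connected. For bicriticality, `G - u - v` has a perfect
matching as soon as there is an `M`-alternating path from `σ v` to `σ u`. If there is none of length
at most three, the vertices adjacent to neither `σ u` nor `σ v` contain exactly one end of every
edge of `M`; this `n`-set is not independent, and an edge inside it closes an alternating path of
length five. -/

lemma Function.Involutive.two_mul_ncard_eq {V : Type*} [Finite V] {σ : V → V}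
    (hσ : Function.Involutive σ) {A : Set V} (hA : ∀ v, v ∈ A ↔ σ v ∉ A) :
    2 * A.ncard = Nat.card V := by
  have himage : σ '' A = Aᶜ := by
    ext v
    rw [Set.mem_compl_iff, hA, not_not, Set.image_eq_preimage_of_inverse hσ.leftInverse
      hσ.rightInverse]
    rfl
  rw [← Set.ncard_add_ncard_compl A, ← himage, Set.ncard_image_of_injective A hσ.injective]
  ring

lemma le_vertexConn {V : Type*} {G : SimpleGraph V} {k : ℕ}
    (h : ∀ X : Set V, X.ncard < k → (G.induce Xᶜ).Connected ∧ 1 < Xᶜ.ncard) :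
    k ≤ vertexConn G := by
  refine le_csInf ⟨_, Set.univ, rfl, Or.inr (by simp)⟩ fun m ⟨X, hXm, hX⟩ => ?_
  by_contra hm
  have := h X (by omega)
  rcases hX with hX | hX
  exacts [hX this.1, by omega]

lemma exists_isPM_forcingNum_eq_maxForcing {V : Type*} [Finite V] {G : SimpleGraph V}
    (hPM : ∃ M, IsPM G M) : ∃ M, IsPM G M ∧ forcingNum G M = maxForcing G := by
  obtain ⟨M, hM⟩ := hPM
  have hfin : {k | ∃ M, IsPM G M ∧ forcingNum G M = k}.Finite :=
    (Set.finite_range (forcingNum G)).subset fun _ ⟨M, _, hk⟩ => ⟨M, hk⟩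
  exact Nat.sSup_mem (s := {k | ∃ M, IsPM G M ∧ forcingNum G M = k}) ⟨_, M, hM, rfl⟩
    hfin.bddAbove

lemma exists_isPM_ne_of_ncard_le_forcingNum {V : Type*} {G : SimpleGraph V}
    {M : Set (Sym2 V)} [Finite V] (hf : M.ncard ≤ forcingNum G M + 1) {e f : Sym2 V}
    (he : e ∈ M) (hf' : f ∈ M) (hef : e ≠ f) :
    ∃ M', IsPM G M' ∧ M \ {e, f} ⊆ M' ∧ M' ≠ M := by
  have hpair : {e, f} ⊆ M := Set.insert_subset he (Set.singleton_subset_iff.2 hf')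
  have hS : ¬ IsForcingSet G M (M \ {e, f}) := fun h => by
    have hle : forcingNum G M ≤ (M \ {e, f}).ncard := Nat.sInf_le ⟨_, h, rfl⟩
    have h2 := Set.ncard_le_ncard hpair
    rw [Set.ncard_sdiff hpair, Set.ncard_pair hef] at hle
    rw [Set.ncard_pair hef] at h2
    omega
  simpa [IsForcingSet] using hS

namespace IsPM

variable {V : Type*} {G : SimpleGraph V} {M : Set (Sym2 V)}

lemma eq_of_mem_of_mem (hM : IsPM G M) {e f : Sym2 V} {v : V} (he : e ∈ M) (hf : f ∈ M)
    (hve : v ∈ e) (hvf : v ∈ f) : e = f :=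
  by_contra fun hne => hM.2.1 e he f hf hne v hve hvf

noncomputable def partner (hM : IsPM G M) (v : V) : V :=
  Sym2.Mem.other (hM.2.2 v).choose_spec.2

section partner

variable (hM : IsPM G M)

local notation "σ" => IsPM.partner hM

lemma mk_partner_mem (v : V) : s(v, σ v) ∈ M := by
  rw [partner, Sym2.other_spec]
  exact (hM.2.2 v).choose_spec.1

lemma eq_mk_partner {e : Sym2 V} {v : V} (he : e ∈ M) (hv : v ∈ e) : e = s(v, σ v) :=
  hM.eq_of_mem_of_mem he (hM.mk_partner_mem v) hv (Sym2.mem_mk_left _ _)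

lemma partner_eq_iff {v w : V} : σ v = w ↔ s(v, w) ∈ M :=
  ⟨by rintro rfl; exact hM.mk_partner_mem v,
    fun h => (Sym2.congr_right.1 (hM.eq_mk_partner h (Sym2.mem_mk_left v w))).symm⟩

lemma adj_partner (v : V) : G.Adj v (σ v) :=
  hM.1 (hM.mk_partner_mem v)

lemma partner_ne (v : V) : σ v ≠ v :=
  (hM.adj_partner v).ne.symm

@[simp]
lemma partner_partner (v : V) : σ (σ v) = v :=
  hM.partner_eq_iff.2 (Sym2.eq_swap ▸ hM.mk_partner_mem v)

lemma partner_involutive : Function.Involutive σ :=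
  hM.partner_partner

lemma mk_partner_ne_mk_partner {v w : V} (hvw : v ≠ w) (hvw' : v ≠ σ w) :
    s(v, σ v) ≠ s(w, σ w) := fun h =>
  (Sym2.mem_iff.1 (h ▸ Sym2.mem_mk_left v _)).elim hvw hvw'

lemma mk_partner_swap_mem_sdiff {v w : V} (hvw : v ≠ w) (hvw' : v ≠ σ w) :
    s(σ v, v) ∈ M \ {s(w, σ w)} :=
  ⟨Sym2.eq_swap ▸ hM.mk_partner_mem v,
    Sym2.eq_swap (a := v) ▸ hM.mk_partner_ne_mk_partner hvw hvw'⟩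

lemma eq_of_partner_eq {M' : Set (Sym2 V)} (hM' : IsPM G M') (h : ∀ v, σ v = hM'.partner v) :
    M = M' := by
  ext e
  induction e using Sym2.ind with
  | _ v w => rw [← hM.partner_eq_iff, ← hM'.partner_eq_iff, h]

end partner

lemma two_mul_ncard [Finite V] (hM : IsPM G M) : 2 * M.ncard = Nat.card V := by
  classical
  have := Fintype.ofFinite V
  have hfib : ∀ e ∈ M.toFinset,
      (Finset.univ.filter fun v => s(v, hM.partner v) = e).card = 2 := by
    intro e he
    rw [Set.mem_toFinset] at he
    have : (Finset.univ.filter fun v => s(v, hM.partner v) = e) = e.toFinset := by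
      ext v
      simp only [Finset.mem_filter, Finset.mem_univ, true_and, Sym2.mem_toFinset]
      exact ⟨fun h => h ▸ Sym2.mem_mk_left _ _, fun h => (hM.eq_mk_partner he h).symm⟩
    rw [this, Sym2.card_toFinset_of_not_isDiag]
    exact G.not_isDiag_of_mem_edgeSet (hM.1 he)
  rw [Nat.card_eq_fintype_card, ← Finset.card_univ,
    Finset.card_eq_sum_card_fiberwise (t := M.toFinset) fun v _ => by
      simpa using hM.mk_partner_mem v,
    Finset.sum_congr rfl hfib, Finset.sum_const, smul_eq_mul, mul_comm,
    Set.ncard_eq_toFinset_card']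

lemma isPMOn_compl_pair (hM : IsPM G M) {a b : V} (hab : s(a, b) ∈ M) :
    IsPMOn G {a, b}ᶜ (M \ {s(a, b)}) := by
  refine ⟨fun e he => hM.1 he.1, fun e ⟨he, hne⟩ w hwe hw => hne ?_,
    fun e he f hf => hM.2.1 e he.1 f hf.1, fun w hw => ?_⟩
  · exact hM.eq_of_mem_of_mem he hab hwe (Sym2.mem_iff.2 hw)
  · obtain ⟨e, he, hwe⟩ := hM.2.2 w
    exact ⟨e, ⟨he, fun h => hw (Sym2.mem_iff.1 (h ▸ hwe))⟩, hwe⟩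

end IsPM

section IsPMOn

variable {V : Type*} {G : SimpleGraph V}

lemma IsPMOn.eq_of_mem_of_mem {T : Set V} {N : Set (Sym2 V)} (hN : IsPMOn G T N)
    {e f : Sym2 V} {v : V} (he : e ∈ N) (hf : f ∈ N) (hve : v ∈ e) (hvf : v ∈ f) : e = f :=
  by_contra fun hne => hN.2.2.1 e he f hf hne v hve hvf

/-- One step along an alternating path: the uncovered vertex moves from `b` to `z`. -/
lemma IsPMOn.exchange {a b y z : V} {N : Set (Sym2 V)} (hN : IsPMOn G {a, b}ᶜ N) (hab : a ≠ b)
    (hyz : s(y, z) ∈ N) (hby : G.Adj b y) :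
    IsPMOn G {a, z}ᶜ (insert s(b, y) (N \ {s(y, z)})) := by
  have hvert : ∀ e ∈ N, ∀ w ∈ e, w ≠ a ∧ w ≠ b := fun e he w hw => by
    simpa [not_or] using hN.2.1 e he w hw
  have hy := hvert _ hyz y (Sym2.mem_mk_left y z)
  have hz := hvert _ hyz z (Sym2.mem_mk_right y z)
  have hyz' : y ≠ z := (hN.1 hyz).ne
  have hz_of : ∀ f ∈ N \ {s(y, z)}, ∀ w ∈ f, w ≠ z := fun f ⟨hf, hne⟩ w hw hwz =>
    hne (hN.eq_of_mem_of_mem hf hyz hw (hwz ▸ Sym2.mem_mk_right y z))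
  refine ⟨?_, ?_, ?_, ?_⟩
  · rintro e (rfl | he)
    exacts [hby, hN.1 he.1]
  · rintro e (rfl | he) w hw
    · rcases Sym2.mem_iff.1 hw with rfl | rfl
      · simp [hab.symm, hz.2.symm]
      · simp [hy.1, hyz']
    · simp [(hvert e he.1 w hw).1, hz_of e he w hw]
  · have hp : (N \ {s(y, z)}).Pairwise fun e f => ∀ v ∈ e, v ∉ f :=
      Set.Pairwise.mono Set.sdiff_subset hN.2.2.1
    refine hp.insert fun f hf _ => ?_
    have key : ∀ w ∈ s(b, y), w ∉ f := fun w hw hwf => by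
      rcases Sym2.mem_iff.1 hw with rfl | rfl
      · exact (hvert f hf.1 w hwf).2 rfl
      · exact hf.2 (hN.eq_of_mem_of_mem hf.1 hyz hwf (Sym2.mem_mk_left w z))
    exact ⟨key, fun w hwf hw => key w hw hwf⟩
  · intro w hw
    simp only [Set.mem_compl_iff, Set.mem_insert_iff, Set.mem_singleton_iff, not_or] at hw
    by_cases hwb : w = b
    · exact ⟨s(b, y), Set.mem_insert _ _, hwb ▸ Sym2.mem_mk_left b y⟩
    obtain ⟨f, hf, hwf⟩ := hN.2.2.2 w (by simp [hw.1, hwb])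
    by_cases hfyz : f = s(y, z)
    · refine ⟨s(b, y), Set.mem_insert _ _, ?_⟩
      rcases Sym2.mem_iff.1 (hfyz ▸ hwf) with rfl | rfl
      exacts [Sym2.mem_mk_right b w, absurd rfl hw.2]
    · exact ⟨f, Set.mem_insert_of_mem _ ⟨hf, hfyz⟩, hwf⟩

lemma IsPMOn.isPM_insert {a b : V} {N : Set (Sym2 V)} (hN : IsPMOn G {a, b}ᶜ N)
    (hab : G.Adj a b) : IsPM G (insert s(a, b) N) := by
  refine ⟨?_, ?_, fun w => ?_⟩
  · rintro e (rfl | he)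
    exacts [hab, hN.1 he]
  · have hp : N.Pairwise fun e f => ∀ v ∈ e, v ∉ f := hN.2.2.1
    refine hp.insert fun f hf _ => ?_
    have key : ∀ w ∈ s(a, b), w ∉ f := fun w hw hwf =>
      hN.2.1 f hf w hwf (Sym2.mem_iff.1 hw)
    exact ⟨key, fun w hwf hw => key w hw hwf⟩
  · by_cases hw : w = a ∨ w = b
    · exact ⟨s(a, b), Set.mem_insert _ _, Sym2.mem_iff.2 hw⟩
    · obtain ⟨f, hf, hwf⟩ := hN.2.2.2 w hw
      exact ⟨f, Set.mem_insert_of_mem _ hf, hwf⟩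

lemma IsPMOn.exists_isPM_induce {T : Set V} {N : Set (Sym2 V)} (hN : IsPMOn G T N) :
    ∃ M, IsPM (G.induce T) M := by
  refine ⟨{e | e.map Subtype.val ∈ N}, fun e he => ?_, fun e he f hf hef w hwe hwf => ?_,
    fun w => ?_⟩
  · induction e using Sym2.ind with
    | _ x y => exact hN.1 he
  · exact hN.2.2.1 _ he _ hf (fun h => hef (Sym2.map.injective Subtype.val_injective h)) w
      (Sym2.mem_map.2 ⟨w, hwe, rfl⟩) (Sym2.mem_map.2 ⟨w, hwf, rfl⟩)
  · obtain ⟨e, he, hwe⟩ := hN.2.2.2 w w.2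
    induction e using Sym2.ind with
    | _ x y =>
      have hx : x ∈ T := hN.2.1 _ he x (Sym2.mem_mk_left x y)
      have hy : y ∈ T := hN.2.1 _ he y (Sym2.mem_mk_right x y)
      refine ⟨s(⟨x, hx⟩, ⟨y, hy⟩), he, ?_⟩
      rcases Sym2.mem_iff.1 hwe with h | h
      exacts [Sym2.mem_iff.2 (Or.inl (Subtype.ext h)), Sym2.mem_iff.2 (Or.inr (Subtype.ext h))]

end IsPMOn

lemma isExtendable_one_of_forall_adj {V : Type*} [Fintype V] {G : SimpleGraph V}
    (hconn : G.Connected) (hV : 4 ≤ Fintype.card V) (hPM : ∃ M, IsPM G M)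
    (h : ∀ u v, G.Adj u v → ∃ N, IsPMOn G {u, v}ᶜ N) : IsExtendable G 1 := by
  refine ⟨hconn, hV, hPM, fun N hN _ hN1 => ?_⟩
  obtain ⟨e, rfl⟩ := Set.ncard_eq_one.1 hN1
  induction e using Sym2.ind with
  | _ x y =>
    obtain ⟨N', hN'⟩ := h x y (hN rfl)
    exact ⟨_, hN'.isPM_insert (hN rfl), Set.singleton_subset_iff.2 (Set.mem_insert _ _)⟩

namespace IsPM

variable {V : Type*} {G : SimpleGraph V} {M : Set (Sym2 V)} (hM : IsPM G M)

local notation "σ" => IsPM.partner hM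

lemma partner_mem_of_forall_mk_partner_mem {M' : Set (Sym2 V)} (hM' : IsPM G M') {Q : Set V}
    (hQ : ∀ y ∈ Q, σ y ∈ Q) (hM'Q : ∀ y ∉ Q, s(y, σ y) ∈ M') {y : V} (hy : y ∈ Q) :
    hM'.partner y ∈ Q := by
  by_contra h
  have h' := hM'.partner_eq_iff.2 (hM'Q _ h)
  rw [partner_partner] at h'
  apply h
  rw [← hM.partner_partner (hM'.partner y), ← h']
  exact hQ y hy

lemma adj_or_adj_partner_of_ncard_le_forcingNum [Finite V]
    (hf : M.ncard ≤ forcingNum G M + 1) {a x : V} (hxa : x ≠ a) :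
    G.Adj a x ∨ G.Adj a (σ x) := by
  by_cases hx : x = σ a
  · exact Or.inl (hx ▸ hM.adj_partner a)
  have hax : a ≠ σ x := fun h => hx (by rw [h, partner_partner])
  obtain ⟨M', hM', hSM', hM'M⟩ := exists_isPM_ne_of_ncard_le_forcingNum hf
    (hM.mk_partner_mem a) (hM.mk_partner_mem x) (hM.mk_partner_ne_mk_partner hxa.symm hax)
  set τ := hM'.partner
  have hττ : ∀ y, τ (τ y) = y := hM'.partner_partner
  set Q : Set V := {a, σ a, x, σ x}
  have hQ : ∀ y ∈ Q, σ y ∈ Q := by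
    rintro y (rfl | rfl | rfl | rfl) <;> simp [Q]
  have hM'Q : ∀ y ∉ Q, s(y, σ y) ∈ M' := by
    refine fun y hy => hSM' ⟨hM.mk_partner_mem y, ?_⟩
    rintro (h | h) <;> apply hy <;>
      rcases Sym2.mem_iff.1 (h ▸ Sym2.mem_mk_left y _) with rfl | rfl <;> simp [Q]
  have hτQ {y : V} (hy : y ∈ Q) : τ y ∈ Q :=
    hM.partner_mem_of_forall_mk_partner_mem hM' hQ hM'Q hy
  rcases hτQ (y := a) (by simp [Q]) with h | h | h | h
  · exact absurd h (hM'.partner_ne a)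
  · have hτx : τ x = σ x := by
      rcases hτQ (y := x) (by simp [Q]) with h' | h' | h' | h'
      · exact absurd ((hττ x).symm.trans (by rw [h', h])) hx
      · exact absurd ((hττ x).symm.trans (by rw [h', ← h, hττ])) hxa
      · exact absurd h' (hM'.partner_ne x)
      · exact h'
    refine absurd (hM.eq_of_partner_eq hM' fun y => ?_).symm hM'M
    change σ y = τ y
    by_cases hy : y ∈ Q
    · rcases hy with rfl | rfl | rfl | rfl
      · exact h.symm
      · rw [partner_partner, ← h, hττ]
      · exact hτx.symm
      · rw [partner_partner, ← hτx, hττ]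
    · exact (hM'.partner_eq_iff.2 (hM'Q y hy)).symm
  · exact Or.inl (h ▸ hM'.adj_partner a)
  · exact Or.inr (h ▸ hM'.adj_partner a)

/-- Exchange along the alternating path `σ v — σ x ═ x — σ u ═ u`, where `═` marks edges of `M`. -/
lemma exists_isPMOn_of_adj_of_adj {u v x : V} (huv : u ≠ v) (hvu : v ≠ σ u)
    (hb : ¬ G.Adj (σ v) (σ u)) (hux : G.Adj (σ u) x) (hvx : G.Adj (σ v) (σ x)) :
    ∃ N, IsPMOn G {v, u}ᶜ N := by
  have hxv : x ≠ v := by rintro rfl; exact G.irrefl hvx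
  have hxv' : x ≠ σ v := by rintro rfl; exact hb hux.symm
  have hux' : u ≠ x := by rintro rfl; exact hb hvx
  have hux'' : u ≠ σ x := by rintro rfl; rw [partner_partner] at hux; exact G.irrefl hux
  have hN₁ := (hM.isPMOn_compl_pair (hM.mk_partner_mem v)).exchange
    (hM.partner_ne v).symm (hM.mk_partner_swap_mem_sdiff hxv hxv') hvx
  refine ⟨_, hN₁.exchange hxv.symm
    (Set.mem_insert_of_mem _ ⟨hM.mk_partner_swap_mem_sdiff huv ?_, ?_⟩) hux.symm⟩
  · exact fun h => hvu (by rw [h, partner_partner])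
  · simpa [Sym2.eq_swap] using hM.mk_partner_ne_mk_partner hux' hux''

variable (hW : ∀ a x, x ≠ a → G.Adj a x ∨ G.Adj a (hM.partner x))
include hW

lemma mem_iff_partner_not_mem_of_not_adj {a b : V} (hab : ¬ G.Adj a b)
    (hpath : ∀ x, G.Adj a x → ¬ G.Adj b (σ x)) (w : V) :
    w ∈ (G.neighborSet a ∪ G.neighborSet b)ᶜ ↔ σ w ∉ (G.neighborSet a ∪ G.neighborSet b)ᶜ := by
  have hpath' := hpath (σ w)
  rw [partner_partner] at hpath'
  simp only [Set.mem_compl_iff, Set.mem_union, mem_neighborSet, not_or]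
  by_cases hwa : w = a
  · subst hwa
    simp [hM.adj_partner, G.adj_comm b, hab]
  by_cases hwb : w = b
  · subst hwb
    simp [hM.adj_partner, hab]
  have := hW a w hwa
  have := hW b w hwb
  have := hpath w
  tauto

/-- Exchange along the alternating path `σ v — σ w' ═ w' — w ═ σ w — σ u ═ u`. -/
lemma exists_isPMOn_of_adj_of_not_adj {u v w w' : V} (huv : u ≠ v) (hvu : v ≠ σ u)
    (hw : ¬ G.Adj (σ u) w ∧ ¬ G.Adj (σ v) w) (hw' : ¬ G.Adj (σ u) w' ∧ ¬ G.Adj (σ v) w')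
    (hww' : G.Adj w w') :
    ∃ N, IsPMOn G {v, u}ᶜ N := by
  have hw'v : w' ≠ v := by rintro rfl; exact hw'.2 (hM.adj_partner w').symm
  have hw'v' : w' ≠ σ v := by rintro rfl; exact hw.2 hww'.symm
  have hwv : w ≠ v := by rintro rfl; exact hw.2 (hM.adj_partner w).symm
  have hwv' : w ≠ σ v := by rintro rfl; exact hw'.2 hww'
  have hwu' : w ≠ σ u := by rintro rfl; exact hw'.1 hww'
  have h1 : G.Adj (σ v) (σ w') := (hW _ _ hw'v').resolve_left hw'.2
  have h2 : G.Adj (σ u) (σ w) := (hW _ _ hwu').resolve_left hw.1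
  have hww'' : w ≠ σ w' := by rintro rfl; exact hw.2 h1
  have huw : u ≠ w := by rintro rfl; exact hw.1 (hM.adj_partner u).symm
  have huw' : u ≠ w' := by rintro rfl; exact hw'.1 (hM.adj_partner u).symm
  have huw'' : u ≠ σ w := fun h => hwu' (by rw [h, partner_partner])
  have huw''' : u ≠ σ w' := fun h => hw.1 ((by rw [h, partner_partner] : w' = σ u) ▸ hww'.symm)
  have hN₁ := (hM.isPMOn_compl_pair (hM.mk_partner_mem v)).exchange
    (hM.partner_ne v).symm (hM.mk_partner_swap_mem_sdiff hw'v hw'v') h1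
  have hw₁ : s(w, σ w) ∈ insert s(σ v, σ w') ((M \ {s(v, σ v)}) \ {s(σ w', w')}) := by
    refine Set.mem_insert_of_mem _
      ⟨⟨hM.mk_partner_mem w, hM.mk_partner_ne_mk_partner hwv hwv'⟩, ?_⟩
    simpa [Sym2.eq_swap] using hM.mk_partner_ne_mk_partner hww'.ne hww''
  have hN₂ := hN₁.exchange hw'v.symm hw₁ hww'.symm
  refine ⟨_, hN₂.exchange (fun h => hwv' (by rw [h, partner_partner])) (Set.mem_insert_of_mem _
    ⟨Set.mem_insert_of_mem _ ⟨hM.mk_partner_swap_mem_sdiff huv ?_, ?_⟩, ?_⟩) h2.symm⟩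
  · exact fun h => hvu (by rw [h, partner_partner])
  · simpa [Sym2.eq_swap] using hM.mk_partner_ne_mk_partner huw' huw'''
  · simpa [Sym2.eq_swap] using hM.mk_partner_ne_mk_partner huw'' (by rwa [partner_partner])

variable (hind : ∀ A : Set V, 2 * A.ncard = Nat.card V → ∃ a ∈ A, ∃ b ∈ A, G.Adj a b)
include hind

lemma exists_isPMOn_compl_pair [Finite V] {u v : V} (huv : u ≠ v) :
    ∃ N, IsPMOn G {u, v}ᶜ N := by
  by_cases hvu : v = σ u
  · exact ⟨_, hM.isPMOn_compl_pair (hvu ▸ hM.mk_partner_mem u)⟩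
  rw [Set.pair_comm]
  by_cases hb : G.Adj (σ v) (σ u)
  · exact ⟨_, (hM.isPMOn_compl_pair (hM.mk_partner_mem v)).exchange (hM.partner_ne v).symm
      (hM.mk_partner_swap_mem_sdiff huv fun h => hvu (by rw [h, partner_partner])) hb⟩
  by_cases hc : ∃ x, G.Adj (σ u) x ∧ G.Adj (σ v) (σ x)
  · obtain ⟨x, hux, hvx⟩ := hc
    exact hM.exists_isPMOn_of_adj_of_adj huv hvu hb hux hvx
  push Not at hc
  obtain ⟨w, hw, w', hw', hww'⟩ := hind _ (hM.partner_involutive.two_mul_ncard_eq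
    (hM.mem_iff_partner_not_mem_of_not_adj hW (fun h => hb h.symm) hc))
  simp only [Set.mem_compl_iff, Set.mem_union, mem_neighborSet, not_or] at hw hw'
  exact hM.exists_isPMOn_of_adj_of_not_adj hW huv hvu hw hw' hww'

lemma induce_compl_connected [Finite V] (hV : 4 ≤ Nat.card V) {X : Set V} (hX : X.ncard ≤ 2) :
    (G.induce Xᶜ).Connected := by
  have hXc := Set.ncard_add_ncard_compl X
  have : Nonempty (Xᶜ : Set V) :=
    (Set.nonempty_of_ncard_ne_zero (by omega : Xᶜ.ncard ≠ 0)).to_subtype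
  rw [connected_iff_exists_forall_reachable]
  by_cases hp : ∃ p, p ∉ X ∧ σ p ∉ X
  · obtain ⟨p, hp, hp'⟩ := hp
    refine ⟨⟨p, hp⟩, fun ⟨x, hx⟩ => ?_⟩
    by_cases hxp : x = p
    · subst hxp; rfl
    have hpp' : (G.induce Xᶜ).Adj ⟨σ p, hp'⟩ ⟨p, hp⟩ := (hM.adj_partner p).symm
    rcases hW x p (Ne.symm hxp) with h | h
    · exact (show (G.induce Xᶜ).Adj ⟨x, hx⟩ ⟨p, hp⟩ from h).symm.reachable
    · have hxp' : (G.induce Xᶜ).Adj ⟨x, hx⟩ ⟨σ p, hp'⟩ := h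
      exact hpp'.symm.reachable.trans hxp'.symm.reachable
  · -- otherwise `σ` maps `Xᶜ` into `X`, so `|V| ≤ 4` and `G` is complete
    push Not at hp
    have hle : Xᶜ.ncard ≤ X.ncard :=
      (Set.ncard_le_ncard (t := σ '' X) fun x hx => ⟨σ x, hp x hx, partner_partner hM x⟩).trans
        (Set.ncard_image_le (Set.toFinite X))
    obtain ⟨x₀⟩ := this
    refine ⟨x₀, fun y => ?_⟩
    by_cases hxy : x₀ = y
    · rw [hxy]
    refine SimpleGraph.Adj.reachable ?_
    obtain ⟨a, ha, b, hb, hab⟩ := hind {x₀.1, y.1} (by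
      rw [Set.ncard_pair (Subtype.coe_ne_coe.2 hxy)]; omega)
    simp only [Set.mem_insert_iff, Set.mem_singleton_iff] at ha hb
    rcases ha with rfl | rfl <;> rcases hb with rfl | rfl
    exacts [absurd hab (G.irrefl), hab, hab.symm, absurd hab (G.irrefl)]

end IsPM

/-- Lemma 2.5, second part. -/
theorem stmt6 {V : Type*} [Fintype V] (n : ℕ) (hn : 2 ≤ n)
    (G : SimpleGraph V) (hcard : Fintype.card V = 2 * n)
    (hPM : ∃ M, IsPM G M) (hF : maxForcing G = n - 1)
    (hind : ¬ ∃ A : Set V, A.ncard = n ∧ ∀ a ∈ A, ∀ b ∈ A, ¬ G.Adj a b) :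
    (3 ≤ vertexConn G ∧ (∃ e, e ∈ G.edgeSet) ∧
        (∀ u v : V, u ≠ v → ∃ M, IsPM (G.induce ({u, v}ᶜ : Set V)) M)) ∧
      IsExtendable G 1 := by
  obtain ⟨M, hM, hMF⟩ := exists_isPM_forcingNum_eq_maxForcing hPM
  have hV : Nat.card V = 2 * n := by rw [Nat.card_eq_fintype_card, hcard]
  have hMn := hM.two_mul_ncard
  have hW := fun a x (hxa : x ≠ a) =>
    hM.adj_or_adj_partner_of_ncard_le_forcingNum (by omega) hxa
  have hind' : ∀ A : Set V, 2 * A.ncard = Nat.card V → ∃ a ∈ A, ∃ b ∈ A, G.Adj a b := by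
    intro A hA
    by_contra h
    push Not at h
    exact hind ⟨A, by omega, h⟩
  have hconn (X : Set V) (hX : X.ncard ≤ 2) : (G.induce Xᶜ).Connected :=
    hM.induce_compl_connected hW hind' (by omega) hX
  have hbicrit {u v : V} (huv : u ≠ v) := hM.exists_isPMOn_compl_pair hW hind' huv
  have hGconn : G.Connected := by
    have := hconn ∅ (by simp)
    rwa [Set.compl_empty, (induceUnivIso G).connected_iff] at this
  refine ⟨⟨le_vertexConn fun X hX => ⟨hconn X (by omega), ?_⟩, ?_, fun u v huv => ?_⟩,
    isExtendable_one_of_forall_adj hGconn (by omega) hPM fun u v h => hbicrit h.ne⟩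
  · have := Set.ncard_add_ncard_compl X
    omega
  · obtain ⟨v⟩ := hGconn.nonempty
    exact ⟨_, hM.1 (hM.mk_partner_mem v)⟩
  · obtain ⟨N, hN⟩ := hbicrit huv
    exact hN.exists_isPM_induce
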